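/- Let u₀ : (−1,1) → ℝ be u₀(x) = log(x² + 1) − log 2. Then for every s with 0 < |s| < 1, the supremum sup_{x ∈ (−1,1)} (s·x − u₀(x)) is attained at the unique point x₀(s) = (1 − √(1−s²))/s ∈ (−1,1), and its value is u₀*(s) = 1 − √(1−s²) − log(1 − √(1−s²)) + log(s²). -/

import Mathlib

/-!
On `[-1, 1]` the second derivative `2(1 - x²)/(x² + 1)²` of `u₀` is positive in the interior, so
`x ↦ s x - u₀ x` is strictly concave there, and its critical point `x₀(s)` in `(-1, 1)` is its
unique strict maximiser. Writing `t = √(1 - s²)`, one has `x₀ = s/(1 + t)`, `s x₀ = 1 - t` and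
`x₀² + 1 = 2x₀/s = 2(1 - t)/s²`, which gives the value of the supremum.
-/

/-- The boundary datum `u₀(x) = log(x²+1) - log 2` of Example 2.2. -/
noncomputable def ex0 (x : ℝ) : ℝ := Real.log (x ^ 2 + 1) - Real.log 2

open Real Set

theorem StrictConcaveOn.lt_of_hasDerivAt_zero {S : Set ℝ} {f : ℝ → ℝ} {x₀ x : ℝ}
    (hf : StrictConcaveOn ℝ S f) (hx₀ : x₀ ∈ S) (hx : x ∈ S) (hne : x ≠ x₀)
    (hd : HasDerivAt f 0 x₀) : f x < f x₀ := by
  rcases hne.lt_or_gt with hlt | hlt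
  · have := hf.lt_slope_of_hasDerivAt hx hx₀ hlt hd
    rw [slope_def_field, div_pos_iff_of_pos_right (sub_pos.2 hlt)] at this
    linarith
  · have := hf.slope_lt_of_hasDerivAt hx₀ hx hlt hd
    rw [slope_def_field, div_neg_iff] at this
    rcases this with ⟨-, h⟩ | ⟨h, -⟩ <;> linarith

theorem hasDerivAt_ex0 (x : ℝ) : HasDerivAt ex0 (2 * x / (x ^ 2 + 1)) x := by
  have h : HasDerivAt (fun x => x ^ 2 + 1) (2 * x) x := by
    simpa using (hasDerivAt_pow 2 x).add_const 1
  exact (h.log (by positivity)).sub_const _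

theorem deriv_ex0 : deriv ex0 = fun x => 2 * x / (x ^ 2 + 1) :=
  funext fun x => (hasDerivAt_ex0 x).deriv

theorem iterate_two_deriv_ex0 (x : ℝ) : deriv^[2] ex0 x = 2 * (1 - x ^ 2) / (x ^ 2 + 1) ^ 2 := by
  have hden : x ^ 2 + 1 ≠ 0 := by positivity
  have h := ((hasDerivAt_id' x).const_mul 2).fun_div ((hasDerivAt_pow 2 x).add_const 1) hden
  rw [Function.iterate_succ_apply, Function.iterate_one, deriv_ex0, h.deriv]
  field_simp
  ring

theorem strictConvexOn_ex0 : StrictConvexOn ℝ (Icc (-1) 1) ex0 := by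
  refine strictConvexOn_of_deriv2_pos (convex_Icc _ _)
    (fun x _ => (hasDerivAt_ex0 x).continuousAt.continuousWithinAt) fun x hx => ?_
  rw [interior_Icc] at hx
  rw [iterate_two_deriv_ex0]
  have : 0 < 1 - x ^ 2 := by nlinarith [hx.1, hx.2]
  positivity

theorem strictConcaveOn_mul_sub_ex0 (s : ℝ) :
    StrictConcaveOn ℝ (Icc (-1) 1) fun x => s * x - ex0 x :=
  ((LinearMap.mulLeft ℝ s).concaveOn (convex_Icc _ _)).sub_strictConvexOn strictConvexOn_ex0

/-- The root of `s x² - 2x + s = 0`, i.e. of `u₀'(x) = s`, lying in `(-1, 1)`. -/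
noncomputable def ex0Argmax (s : ℝ) : ℝ := (1 - √(1 - s ^ 2)) / s

section ex0Argmax

variable {s : ℝ}

theorem sq_sqrt_one_sub_sq (hs : |s| ≤ 1) : √(1 - s ^ 2) ^ 2 = 1 - s ^ 2 :=
  sq_sqrt (sub_nonneg.2 ((sq_le_one_iff_abs_le_one s).2 hs))

theorem ex0Argmax_eq_div (hs : |s| ≤ 1) : ex0Argmax s = s / (1 + √(1 - s ^ 2)) := by
  rcases eq_or_ne s 0 with rfl | hs0
  · simp [ex0Argmax]
  have ht := sq_sqrt_one_sub_sq hs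
  rw [ex0Argmax, div_eq_div_iff hs0 (by positivity)]
  linear_combination -ht

theorem abs_ex0Argmax_lt_one (hs : |s| < 1) : |ex0Argmax s| < 1 := by
  rw [ex0Argmax_eq_div hs.le, abs_div, abs_of_pos (by positivity : (0 : ℝ) < 1 + √(1 - s ^ 2)),
    div_lt_one (by positivity)]
  linarith [sqrt_nonneg (1 - s ^ 2)]

theorem two_mul_ex0Argmax_div (hs : |s| ≤ 1) :
    2 * ex0Argmax s / (ex0Argmax s ^ 2 + 1) = s := by
  have ht := sq_sqrt_one_sub_sq hs
  rw [ex0Argmax_eq_div hs, div_eq_iff (by positivity)]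
  field_simp
  linear_combination (-s) * ht

theorem mul_ex0Argmax (hs : s ≠ 0) : s * ex0Argmax s = 1 - √(1 - s ^ 2) :=
  mul_div_cancel₀ _ hs

theorem mul_ex0Argmax_sub_ex0 (hs0 : s ≠ 0) (hs1 : |s| ≤ 1) :
    s * ex0Argmax s - ex0 (ex0Argmax s) =
      1 - √(1 - s ^ 2) - log (1 - √(1 - s ^ 2)) + log (s ^ 2) := by
  have hpos : 0 < 1 - √(1 - s ^ 2) := by
    rw [sub_pos, sqrt_lt' one_pos]
    have := pow_pos (abs_pos.2 hs0) 2
    rw [sq_abs] at this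
    linarith
  have hsq : ex0Argmax s ^ 2 + 1 = 2 * (1 - √(1 - s ^ 2)) / s ^ 2 := by
    have hcrit := two_mul_ex0Argmax_div hs1
    rw [div_eq_iff (by positivity)] at hcrit
    rw [← mul_ex0Argmax hs0, eq_div_iff (by positivity)]
    linear_combination (-s) * hcrit
  rw [ex0, hsq, log_div (by positivity) (by positivity), log_mul two_ne_zero hpos.ne',
    mul_ex0Argmax hs0]
  ring

end ex0Argmax

theorem hasDerivAt_mul_sub_ex0_ex0Argmax {s : ℝ} (hs : |s| ≤ 1) :
    HasDerivAt (fun x => s * x - ex0 x) 0 (ex0Argmax s) :=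
  (((hasDerivAt_id' _).const_mul s).sub (hasDerivAt_ex0 _)).congr_deriv
    (by rw [two_mul_ex0Argmax_div hs]; ring)

/-- The Legendre transform of `u₀(x) = log(x²+1) - log 2` on `(-1,1)`: for
`0 < |s| < 1` the supremum of `s·x - u₀(x)` over `(-1,1)` is attained exactly at
`x₀(s) = (1 - √(1-s²))/s`, with value `1 - √(1-s²) - log(1-√(1-s²)) + log(s²)`. -/
theorem stmt14 (s : ℝ) (hs0 : 0 < |s|) (hs1 : |s| < 1) :
    ∀ x₀ : ℝ, x₀ = (1 - Real.sqrt (1 - s ^ 2)) / s →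
      x₀ ∈ Set.Ioo (-1 : ℝ) 1 ∧
      IsGreatest ((fun x => s * x - ex0 x) '' Set.Ioo (-1 : ℝ) 1)
        (s * x₀ - ex0 x₀) ∧
      (∀ x ∈ Set.Ioo (-1 : ℝ) 1, s * x - ex0 x = s * x₀ - ex0 x₀ → x = x₀) ∧
      s * x₀ - ex0 x₀ =
        1 - Real.sqrt (1 - s ^ 2) - Real.log (1 - Real.sqrt (1 - s ^ 2)) +
          Real.log (s ^ 2) := by
  rintro x₀ (rfl : x₀ = ex0Argmax s)
  have hmem : ex0Argmax s ∈ Ioo (-1) 1 := abs_lt.mp (abs_ex0Argmax_lt_one hs1)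
  have hlt : ∀ x ∈ Ioo (-1) 1, x ≠ ex0Argmax s →
      s * x - ex0 x < s * ex0Argmax s - ex0 (ex0Argmax s) := fun x hx hne =>
    (strictConcaveOn_mul_sub_ex0 s).lt_of_hasDerivAt_zero (Ioo_subset_Icc_self hmem)
      (Ioo_subset_Icc_self hx) hne (hasDerivAt_mul_sub_ex0_ex0Argmax hs1.le)
  refine ⟨hmem, ⟨mem_image_of_mem _ hmem, ?_⟩, fun x hx heq => ?_,
    mul_ex0Argmax_sub_ex0 (abs_pos.mp hs0) hs1.le⟩
  · rintro _ ⟨x, hx, rfl⟩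
    rcases eq_or_ne x (ex0Argmax s) with rfl | hne
    exacts [le_rfl, (hlt x hx hne).le]
  · by_contra hne
    exact (hlt x hx hne).ne heq
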